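/- Let e ≥ 2 and a,b ∈ ℕ with 0 ≤ a ≤ q-1 and b - ea ≥ 0. Set s̃ = min{⌊(b-q)/e⌋, a} if b ≥ q and s̃ = -1 otherwise. Then the code C_e(a,b) = Σ_{d=0}^{a} span{(0^{a-d}, α_1^d, …, α_q^d)} ⊗ PRS_q(b - ed + 1) ⊆ F_q^{(q+1)^2} has dimension (s̃+1)(q+1) + (a - s̃)(b + 1 - e(a + s̃ + 1)/2). -/

import Mathlib

/-- Evaluation points of the projective Reed–Solomon code: the point at infinity `(0,1)`
(indexed by `none`) and the affine points `(1,α)` for `α ∈ F` (indexed by `some α`). -/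
noncomputable def PRSpt (F : Type*) [Field F] (p : Option F) : Fin 2 → F :=
  Option.elim p ![(0 : F), 1] (fun α => ![1, α])

/-- The projective Reed–Solomon code `PRS_q(k)`: the image of the space of homogeneous
polynomials of degree `k - 1` in two variables under evaluation at the `q+1` points of
`ℙ¹(F)`.  By convention it is `{0}` for `k ≤ 0` (and it is the full space for `k ≥ q+1`). -/
noncomputable def PRS (F : Type*) [Field F] (k : ℤ) : Submodule F (Option F → F) :=
  if k ≤ 0 then ⊥
  else (MvPolynomial.homogeneousSubmodule (Fin 2) F (k - 1).toNat).map
    (LinearMap.pi fun p : Option F => (MvPolynomial.aeval (PRSpt F p)).toLinearMap)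

/-- The linear map `c ↦ v ⊗ c`, sending a word `c` to the matrix `(v i * c j)_{i,j}`. -/
noncomputable def vTensor (F : Type*) [Field F] {ι₁ ι₂ : Type*} (v : ι₁ → F) :
    (ι₂ → F) →ₗ[F] (ι₁ → ι₂ → F) where
  toFun c := fun i j => v i * c j
  map_add' c d := by funext i j; simp [mul_add]
  map_smul' a c := by funext i j; simp only [Pi.smul_apply, smul_eq_mul, RingHom.id_apply]; ring

/-- The vector `(0^{a-d}, α₁^d, …, α_q^d) ∈ F^{q+1}` (with the convention `0^0 = 1`). -/
noncomputable def vproj (F : Type*) [Field F] (a d : ℕ) : Option F → F :=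
  fun p => Option.elim p (if d = a then (1 : F) else 0) (fun α => α ^ d)

/-- The code `C_e(a,b) = Σ_{d=0}^{a} ⟨(0^{a-d}, α₁^d, …, α_q^d)⟩ ⊗ PRS_q(b - ed + 1)`
inside `F^{(q+1)²}`: the AG code on the Hirzebruch surface `H_e` parametrized by
`aS_e + bF_e`, evaluated at all `(q+1)²` rational points. -/
noncomputable def CE (F : Type*) [Field F] (e a b : ℕ) :
    Submodule F (Option F → Option F → F) :=
  ⨆ d ∈ Finset.Iic a, (PRS F ((b : ℤ) - e * d + 1)).map (vTensor F (vproj F a d))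

/-!
The vectors `(0^{a-d}, α^d)`, `d ≤ a < q`, are linearly independent (their affine parts are
distinct monomials of degree `< q`), so the sum defining `C_e(a,b)` is direct and its dimension is
`∑_{d ≤ a} dim PRS_q(b - ed + 1)`. Dehomogenising, `PRS_q(n+1)` is spanned by `(0^{n-j}, α^j)`,
`j ≤ n`: the word `(1, α^n)` together with the Reed–Solomon code `RS_q(n)` extended by `0` at
infinity, so its dimension is `min(n, q) + 1`. The summands with `d ≤ s̃` are exactly those with
`b - ed ≥ q`; the remaining ones form an arithmetic progression.
-/

section

open Module Polynomial

variable (F : Type*) [Field F]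

noncomputable def RS (n : ℕ) : Submodule F (F → F) :=
  Submodule.span F ((fun (j : ℕ) (α : F) => α ^ j) '' Set.Iio n)

theorem linearIndepOn_pow_fun [Fintype F] :
    LinearIndepOn F (fun (j : ℕ) (α : F) => α ^ j) (Set.Iio (Fintype.card F)) := by
  classical
  let ev : F[X] →ₗ[F] F → F := LinearMap.pi fun α => leval α
  have hX : LinearIndepOn F (fun j : ℕ => (X : F[X]) ^ j) (Set.Iio (Fintype.card F)) := by
    simpa [coe_basisMonomials, monomial_one_right_eq_X_pow] using
      (basisMonomials F).linearIndependent.linearIndepOn (s := Set.Iio (Fintype.card F))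
  have hspan : Submodule.span F ((fun j : ℕ => (X : F[X]) ^ j) '' Set.Iio (Fintype.card F)) ≤
      degreeLT F (Fintype.card F) := by
    rw [Submodule.span_le]
    rintro _ ⟨j, hj, rfl⟩
    rw [SetLike.mem_coe, mem_degreeLT, degree_X_pow]
    exact_mod_cast hj
  have hinj : Set.InjOn ev (degreeLT F (Fintype.card F)) := fun p hp p' hp' h =>
    eq_of_degree_sub_lt_of_eval_finset_eq Finset.univ
      (mem_degreeLT.mp (sub_mem hp hp')) fun α _ => congrFun h α
  exact (hX.map_injOn ev (hinj.mono hspan)).congr fun j _ => by funext α; simp [ev]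

theorem RS_mono {m n : ℕ} (h : m ≤ n) : RS F m ≤ RS F n :=
  Submodule.span_mono (Set.image_mono (Set.Iio_subset_Iio h))

theorem finrank_RS_of_le_card [Fintype F] {n : ℕ} (hn : n ≤ Fintype.card F) :
    finrank F (RS F n) = n := by
  rw [RS, Set.image_eq_range, finrank_span_eq_card
    ((linearIndepOn_pow_fun F).mono (Set.Iio_subset_Iio hn))]
  simp

theorem RS_card [Fintype F] : RS F (Fintype.card F) = ⊤ :=
  Submodule.eq_top_of_finrank_eq <| by
    rw [finrank_RS_of_le_card F le_rfl, finrank_fintype_fun_eq_card]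

theorem finrank_RS [Fintype F] (n : ℕ) : finrank F (RS F n) = min n (Fintype.card F) := by
  rcases le_total n (Fintype.card F) with hn | hn
  · rw [finrank_RS_of_le_card F hn, min_eq_left hn]
  · rw [min_eq_right hn, eq_top_iff.mpr ((RS_card F).symm.le.trans (RS_mono F hn)), finrank_top,
      finrank_fintype_fun_eq_card]

theorem Finsupp.degree_fin_two (d : Fin 2 →₀ ℕ) : d.degree = d 0 + d 1 := by
  rw [Finsupp.degree_eq_sum, Fin.sum_univ_two]

theorem eval_PRSpt_monomial (d : Fin 2 →₀ ℕ) :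
    (LinearMap.pi fun p : Option F => (MvPolynomial.aeval (R := F) (PRSpt F p)).toLinearMap)
      (MvPolynomial.monomial d 1) = vproj F d.degree (d 1) := by
  funext p
  rw [LinearMap.pi_apply, AlgHom.toLinearMap_apply, MvPolynomial.aeval_monomial, map_one, one_mul,
    Finsupp.prod_fintype _ _ fun _ => pow_zero _, Fin.prod_univ_two, Finsupp.degree_fin_two]
  cases p with
  | none => simp [PRSpt, vproj, zero_pow_eq]
  | some α => simp [PRSpt, vproj]

theorem PRS_natCast_add_one (n : ℕ) :
    PRS F (n + 1) = Submodule.span F (vproj F n '' Set.Iic n) := by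
  rw [PRS, if_neg (by omega), show ((n : ℤ) + 1 - 1).toNat = n by omega,
    MvPolynomial.homogeneousSubmodule_eq_finsupp_supported,
    AddMonoidAlgebra.supported_eq_span_single, Submodule.map_span, Set.image_image]
  congr 1
  ext c
  simp only [Set.mem_image, Set.mem_ofPred_eq, Set.mem_Iic, MvPolynomial.single_eq_monomial]
  constructor
  · rintro ⟨d, rfl, rfl⟩
    exact ⟨d 1, by simp [Finsupp.degree_fin_two], (eval_PRSpt_monomial F d).symm⟩
  · rintro ⟨j, hj, rfl⟩
    refine ⟨Finsupp.single 0 (n - j) + Finsupp.single 1 j, ?_, ?_⟩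
    · simp [Finsupp.degree_fin_two, hj]
    · rw [eval_PRSpt_monomial]
      simp [Finsupp.degree_fin_two, hj]

def extendZeroAtInfty : (F → F) →ₗ[F] Option F → F where
  toFun g p := p.elim 0 g
  map_add' g h := by ext (_ | _) <;> simp
  map_smul' c g := by ext (_ | _) <;> simp

theorem extendZeroAtInfty_injective : Function.Injective (extendZeroAtInfty F) :=
  fun _ _ h => funext fun α => congrFun h (some α)

theorem span_vproj_Iic (n : ℕ) : Submodule.span F (vproj F n '' Set.Iic n) =
    (RS F n).map (extendZeroAtInfty F) ⊔ Submodule.span F {vproj F n n} := by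
  rw [← Set.Iio_insert, Set.image_insert_eq, Submodule.span_insert, sup_comm, RS,
    Submodule.map_span, Set.image_image]
  congr 2
  refine Set.image_congr fun j (hj : j < n) => ?_
  ext (_ | _) <;> simp [extendZeroAtInfty, vproj, hj.ne]

theorem finrank_PRS [Fintype F] (n : ℕ) :
    finrank F (PRS F (n + 1)) = min n (Fintype.card F) + 1 := by
  have hn : vproj F n n ∉ (RS F n).map (extendZeroAtInfty F) := by
    rintro ⟨g, -, hg⟩
    simpa [extendZeroAtInfty, vproj] using congrFun hg none
  rw [PRS_natCast_add_one, span_vproj_Iic, Submodule.finrank_sup_span_singleton hn,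
    ← (Submodule.equivMapOfInjective _ (extendZeroAtInfty_injective F) _).finrank_eq, finrank_RS]

theorem finrank_iSup_map_vTensor {ι ι₁ ι₂ : Type*} [Fintype ι] [Finite ι₂]
    {v : ι → ι₁ → F} (hv : LinearIndependent F v) (W : ι → Submodule F (ι₂ → F)) :
    finrank F ↥(⨆ i, (W i).map (vTensor F (v i))) = ∑ i, finrank F (W i) := by
  classical
  let Ψ : (Π i, W i) →ₗ[F] ι₁ → ι₂ → F :=
    LinearMap.lsum F (fun i => W i) F fun i => vTensor F (v i) ∘ₗ (W i).subtype
  have hΨ (w : Π i, W i) : Ψ w = ∑ i, vTensor F (v i) (w i) := by simp [Ψ]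
  have hrange : LinearMap.range Ψ = ⨆ i, (W i).map (vTensor F (v i)) := by
    apply le_antisymm
    · rintro _ ⟨w, rfl⟩
      rw [hΨ]
      exact Submodule.sum_mem _ fun i _ => Submodule.mem_iSup_of_mem i ⟨w i, (w i).2, rfl⟩
    · refine iSup_le fun i => ?_
      rintro _ ⟨c, hc, rfl⟩
      refine ⟨Pi.single i ⟨c, hc⟩, ?_⟩
      rw [hΨ, Finset.sum_eq_single i (fun k _ hk => by simp [Pi.single_eq_of_ne hk]) (by simp)]
      simp
  have hinj : Function.Injective Ψ := by
    refine (injective_iff_map_eq_zero Ψ).mpr fun w hw =>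
      funext fun i => Subtype.ext <| funext fun j => ?_
    refine Fintype.linearIndependent_iff.mp hv (fun i => (w i : ι₂ → F) j) ?_ i
    funext i₁
    simpa [hΨ, vTensor, mul_comm] using congrFun (congrFun hw i₁) j
  rw [← hrange, LinearMap.finrank_range_of_inj hinj, Module.finrank_pi_fintype]

theorem linearIndepOn_vproj [Fintype F] {a : ℕ} (ha : a < Fintype.card F) :
    LinearIndepOn F (vproj F a) (Set.Iic a) := by
  refine LinearIndependent.of_comp (LinearMap.funLeft F F some) ?_
  exact (linearIndepOn_pow_fun F).mono (Set.Iic_subset_Iio.mpr ha)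

theorem finrank_CE [Fintype F] {e a b : ℕ} (ha : a < Fintype.card F) (hb : e * a ≤ b) :
    finrank F (CE F e a b) = ∑ d ∈ Finset.Iic a, (min (b - e * d) (Fintype.card F) + 1) := by
  have hv : LinearIndependent F fun d : Finset.Iic a => vproj F a d :=
    (linearIndepOn_vproj F ha).mono (Finset.coe_Iic a).le
  rw [CE, iSup_subtype', finrank_iSup_map_vTensor F hv, ← Finset.sum_coe_sort (Finset.Iic a)]
  refine Fintype.sum_congr _ _ fun ⟨d, hd⟩ => ?_
  have hed : e * d ≤ b := (Nat.mul_le_mul_left e (Finset.mem_Iic.mp hd)).trans hb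
  rw [show (b : ℤ) - e * d + 1 = ((b - e * d : ℕ) : ℤ) + 1 by push_cast [hed]; ring,
    finrank_PRS]

end

theorem sum_range_sub_mul (c e : ℚ) (m : ℕ) :
    ∑ k ∈ Finset.range m, (c - e * k) = m * c - e * (m * (m - 1) / 2) := by
  induction m with
  | zero => simp
  | succ m ih => rw [Finset.sum_range_succ, ih]; push_cast; ring

theorem sum_Iic_min_sub_mul_add_one {q e a b t : ℕ} (hb : e * a ≤ b) (ht : t ≤ a + 1)
    (hsplit : ∀ d ≤ a, d < t ↔ q + e * d ≤ b) :
    ((∑ d ∈ Finset.Iic a, (min (b - e * d) q + 1) : ℕ) : ℚ) =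
      t * (q + 1) + ((a : ℚ) + 1 - t) * (b + 1 - e * ((a : ℚ) + t) / 2) := by
  obtain ⟨m, hm⟩ : ∃ m, a + 1 = t + m := ⟨a + 1 - t, by omega⟩
  have hlow : ∀ d ∈ Finset.range t, min (b - e * d) q + 1 = q + 1 := fun d hd => by
    have := (hsplit d (by have := Finset.mem_range.mp hd; omega)).mp (Finset.mem_range.mp hd)
    omega
  have hhigh : ∀ k ∈ Finset.range m,
      ((min (b - e * (t + k)) q + 1 : ℕ) : ℚ) = (b + 1 - e * t) - e * k := fun k hk => by
    have hda : t + k ≤ a := by have := Finset.mem_range.mp hk; omega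
    have hed : e * (t + k) ≤ b := (Nat.mul_le_mul_left e hda).trans hb
    have := mt (hsplit _ hda).mpr (by omega)
    rw [min_eq_left (by omega)]
    push_cast [hed]
    ring
  rw [← Nat.range_succ_eq_Iic, hm, Finset.sum_range_add, Nat.cast_add, Finset.sum_congr rfl hlow,
    Finset.sum_const, Finset.card_range, smul_eq_mul, Nat.cast_sum, Finset.sum_congr rfl hhigh,
    sum_range_sub_mul]
  have ha : (a : ℚ) = t + m - 1 := by
    rw [eq_sub_iff_add_eq]
    exact_mod_cast hm
  rw [ha]
  push_cast
  ring

def sTilde (q e a b : ℕ) : ℤ :=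
  if (q : ℤ) ≤ (b : ℤ) then min (((b : ℤ) - q) / e) (a : ℤ) else -1

theorem sTilde_mem_Icc (q e a b : ℕ) : sTilde q e a b ∈ Set.Icc (-1) (a : ℤ) := by
  unfold sTilde
  split_ifs with hqb
  · exact ⟨le_min (by have := Int.ediv_nonneg (sub_nonneg.mpr hqb) e.cast_nonneg; omega)
      (by omega), min_le_right _ _⟩
  · exact ⟨le_rfl, by omega⟩

theorem le_sTilde_iff {q e a b d : ℕ} (he : 0 < e) (hd : d ≤ a) :
    (d : ℤ) ≤ sTilde q e a b ↔ q + e * d ≤ b := by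
  unfold sTilde
  split_ifs with hqb
  · rw [le_min_iff, Int.le_ediv_iff_mul_le (by exact_mod_cast he), mul_comm]
    omega
  · omega

/-- the dimension of `C_e(a,b)` for `e ≥ 2`, `0 ≤ a ≤ q-1`, `b - ea ≥ 0`:
`dim = (s̃ + 1)(q + 1) + (a - s̃)(b + 1 - e(a + s̃ + 1)/2)` where `s̃ = min{⌊(b-q)/e⌋, a}`
if `b ≥ q` and `s̃ = -1` otherwise. -/
theorem CE_dim (F : Type*) [Field F] [Fintype F] (q e a b : ℕ) (s : ℤ)
    (hq : Fintype.card F = q) (he : 2 ≤ e) (ha : a ≤ q - 1) (hb : e * a ≤ b)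
    (hs : s = if (q : ℤ) ≤ (b : ℤ) then min (((b : ℤ) - q) / e) (a : ℤ) else -1) :
    (Module.finrank F (CE F e a b) : ℚ) =
      ((s : ℚ) + 1) * (q + 1) + ((a : ℚ) - s) * ((b : ℚ) + 1 - e * ((a : ℚ) + s + 1) / 2) := by
  subst hq
  have hacard : a < Fintype.card F := by have := Fintype.one_lt_card (α := F); omega
  replace hs : s = sTilde (Fintype.card F) e a b := hs
  obtain ⟨hs₀, hs₁⟩ := hs ▸ sTilde_mem_Icc (Fintype.card F) e a b
  obtain ⟨t, ht⟩ : ∃ t : ℕ, (t : ℤ) = s + 1 := ⟨_, Int.toNat_of_nonneg (by omega)⟩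
  have hsplit (d : ℕ) (hd : d ≤ a) : d < t ↔ Fintype.card F + e * d ≤ b := by
    rw [← le_sTilde_iff (by omega) hd, ← hs]
    omega
  have hst : (s : ℚ) = t - 1 := by rw [← Int.cast_natCast, ht]; push_cast; ring
  rw [finrank_CE F hacard hb, sum_Iic_min_sub_mul_add_one hb (by omega) hsplit, hst]
  ring
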